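/- Let ξ > 0, λ ∈ ℝ, and let h : ℂ → ℝ be continuous. For δ > 0 define the circle average h_δ(z) := (2π)⁻¹ ∫₀^{2π} h(z + δe^{iθ}) dθ, and the δ-LFPP distance D_h^{ξ,δ}(z,w) := inf ∫₀¹ e^{ξ h_δ(P(t))} |P′(t)| dt, the infimum over piecewise continuously differentiable paths P : [0,1] → ℂ with P(0) = z, P(1) = w. Suppose that for all z, w ∈ ℂ the limit 𝔡_h(z,w) := lim_{δ→0⁺} δ^{−λ} D_h^{ξ,δ}(z,w) exists in ℝ. Then: (a) for every constant c ∈ ℝ and all z, w ∈ ℂ, lim_{δ→0⁺} δ^{−λ} D_{h+c}^{ξ,δ}(z,w) = e^{ξc}·𝔡_h(z,w); and (b) for every C > 0 and all z, w ∈ ℂ, lim_{δ→0⁺} δ^{−λ} D_{h(·/C) + Q·log(1/C)}^{ξ,δ}(Cz, Cw) = 𝔡_h(z,w), where Q = (1 − λ)/ξ. -/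
import Mathlib


open MeasureTheory Pointwise

/-- The average of the field `h` over the circle of radius `δ` centered at `z`:
`h_δ(z) = (2π)⁻¹ ∫₀^{2π} h(z + δ e^{iθ}) dθ`. -/
noncomputable def circleAvg (h : ℂ → ℝ) (δ : ℝ) (z : ℂ) : ℝ :=
  (2 * Real.pi)⁻¹ *
    ∫ θ in (0:ℝ)..(2 * Real.pi), h (z + (δ : ℂ) * Complex.exp ((θ : ℂ) * Complex.I))

/-- `P : ℝ → ℂ` is a piecewise continuously differentiable path on `[0,1]`. -/
def IsPiecewiseC1Path (P : ℝ → ℂ) : Prop :=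
  ContinuousOn P (Set.Icc 0 1) ∧
    ∃ n : ℕ, ∃ t : ℕ → ℝ, t 0 = 0 ∧ t n = 1 ∧ (∀ i < n, t i < t (i + 1)) ∧
      ∀ i < n, ContDiffOn ℝ 1 P (Set.Icc (t i) (t (i + 1)))

/-- The `δ`-LFPP distance with parameter `ξ` associated to the field `h`:
`D_h^{ξ,δ}(z,w) = inf ∫₀¹ e^{ξ h_δ(P(t))} |P'(t)| dt` over piecewise `C¹` paths from
`z` to `w`. -/
noncomputable def lfppDist (h : ℂ → ℝ) (ξ δ : ℝ) (z w : ℂ) : ℝ :=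
  sInf { L : ℝ | ∃ P : ℝ → ℂ, IsPiecewiseC1Path P ∧ P 0 = z ∧ P 1 = w ∧
    L = ∫ s in (0:ℝ)..1, Real.exp (ξ * circleAvg h δ (P s)) * ‖deriv P s‖ }

lemma circleAvg_add_const (h : ℂ → ℝ) (hcont : Continuous h) (c δ : ℝ) (z : ℂ) :
    circleAvg (fun u => h u + c) δ z = circleAvg h δ z + c := by
  unfold circleAvg
  have hi : IntervalIntegrable
      (fun θ : ℝ => h (z + (δ:ℂ) * Complex.exp ((θ:ℂ) * Complex.I)))
      volume 0 (2*Real.pi) :=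
    (hcont.comp (by fun_prop)).intervalIntegrable _ _
  rw [intervalIntegral.integral_add hi intervalIntegrable_const,
    intervalIntegral.integral_const, smul_eq_mul, sub_zero, mul_add,
    inv_mul_cancel_left₀ (by positivity : (2*Real.pi) ≠ 0)]

lemma circleAvg_comp_div (h : ℂ → ℝ) {C : ℝ} (hC : 0 < C) (δ : ℝ) (z : ℂ) :
    circleAvg (fun u => h (u / (C:ℂ))) δ z = circleAvg h (δ/C) (z / (C:ℂ)) := by
  have hC0 : (C:ℂ) ≠ 0 := Complex.ofReal_ne_zero.mpr hC.ne'
  unfold circleAvg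
  refine congrArg _ ?_
  apply intervalIntegral.integral_congr
  intro θ _
  refine congrArg h ?_
  push_cast
  field_simp

lemma IsPiecewiseC1Path.const_mul {P : ℝ → ℂ} (hP : IsPiecewiseC1Path P) (a : ℂ) :
    IsPiecewiseC1Path (fun s => a * P s) := by
  obtain ⟨hc, n, t, h0, h1, hlt, hd⟩ := hP
  exact ⟨continuousOn_const.mul hc, n, t, h0, h1, hlt,
    fun i hi => contDiffOn_const.mul (hd i hi)⟩

lemma lfppDist_add_const (h : ℂ → ℝ) (hcont : Continuous h) (ξ c δ : ℝ) (z w : ℂ) :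
    lfppDist (fun u => h u + c) ξ δ z w = Real.exp (ξ * c) * lfppDist h ξ δ z w := by
  have key : ∀ P : ℝ → ℂ,
      (∫ s in (0:ℝ)..1, Real.exp (ξ * circleAvg (fun u => h u + c) δ (P s)) * ‖deriv P s‖)
        = Real.exp (ξ*c) * ∫ s in (0:ℝ)..1,
            Real.exp (ξ * circleAvg h δ (P s)) * ‖deriv P s‖ := by
    intro P
    rw [← intervalIntegral.integral_const_mul]
    apply intervalIntegral.integral_congr
    intro s _
    beta_reduce
    rw [circleAvg_add_const h hcont, mul_add, Real.exp_add]
    ring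
  have hset : { L : ℝ | ∃ P : ℝ → ℂ, IsPiecewiseC1Path P ∧ P 0 = z ∧ P 1 = w ∧
      L = ∫ s in (0:ℝ)..1, Real.exp (ξ * circleAvg (fun u => h u + c) δ (P s)) * ‖deriv P s‖ }
      = Real.exp (ξ*c) • { L : ℝ | ∃ P : ℝ → ℂ, IsPiecewiseC1Path P ∧ P 0 = z ∧ P 1 = w ∧
      L = ∫ s in (0:ℝ)..1, Real.exp (ξ * circleAvg h δ (P s)) * ‖deriv P s‖ } := by
    ext L
    simp only [Set.mem_setOf_eq, Set.mem_smul_set, smul_eq_mul]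
    constructor
    · rintro ⟨P, hP, h0, h1, rfl⟩
      exact ⟨_, ⟨P, hP, h0, h1, rfl⟩, (key P).symm⟩
    · rintro ⟨_, ⟨P, hP, h0, h1, rfl⟩, rfl⟩
      exact ⟨P, hP, h0, h1, (key P).symm⟩
  unfold lfppDist
  rw [hset, Real.sInf_smul_of_nonneg (Real.exp_nonneg _), smul_eq_mul]

lemma lfppDist_scale (h : ℂ → ℝ) (hcont : Continuous h) (ξ lam : ℝ) (hξ : 0 < ξ)
    {C : ℝ} (hC : 0 < C) (δ : ℝ) (z w : ℂ) :
    lfppDist (fun u => h (u / (C : ℂ)) + ((1 - lam) / ξ) * Real.log (1 / C)) ξ δ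
      ((C:ℂ) * z) ((C:ℂ) * w)
      = C ^ lam * lfppDist h ξ (δ/C) z w := by
  have hC0 : (C:ℂ) ≠ 0 := Complex.ofReal_ne_zero.mpr hC.ne'
  set g : ℂ → ℝ := fun u => h (u / (C : ℂ)) + ((1 - lam) / ξ) * Real.log (1 / C) with hg
  have hcont' : Continuous fun u : ℂ => h (u / (C:ℂ)) :=
    hcont.comp (continuous_id.div_const _)
  have hexp : Real.exp (ξ * (((1 - lam) / ξ) * Real.log (1 / C))) = C ^ (lam - 1) := by
    have : ξ * (((1 - lam) / ξ) * Real.log (1 / C)) = Real.log C * (lam - 1) := by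
      rw [one_div, Real.log_inv]
      field_simp
      ring
    rw [this, ← Real.rpow_def_of_pos hC]
  have key : ∀ P : ℝ → ℂ,
      (∫ s in (0:ℝ)..1, Real.exp (ξ * circleAvg g δ (P s)) * ‖deriv P s‖)
        = C ^ lam * ∫ s in (0:ℝ)..1,
            Real.exp (ξ * circleAvg h (δ/C) ((C:ℂ)⁻¹ * P s)) *
              ‖deriv (fun t => (C:ℂ)⁻¹ * P t) s‖ := by
    intro P
    rw [← intervalIntegral.integral_const_mul]
    apply intervalIntegral.integral_congr
    intro s _
    beta_reduce
    rw [show circleAvg g δ (P s)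
          = circleAvg (fun u => h (u / (C:ℂ))) δ (P s) + ((1 - lam) / ξ) * Real.log (1 / C)
        from circleAvg_add_const _ hcont' _ δ _]
    rw [circleAvg_comp_div h hC, mul_add, Real.exp_add, hexp,
      deriv_const_mul_field, norm_mul, norm_inv, Complex.norm_real, Real.norm_eq_abs,
      abs_of_pos hC, div_eq_inv_mul]
    rw [Real.rpow_sub hC, Real.rpow_one]
    field_simp
  have hset : { L : ℝ | ∃ P : ℝ → ℂ, IsPiecewiseC1Path P ∧ P 0 = (C:ℂ)*z ∧ P 1 = (C:ℂ)*w ∧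
      L = ∫ s in (0:ℝ)..1, Real.exp (ξ * circleAvg g δ (P s)) * ‖deriv P s‖ }
      = (C ^ lam) • { L : ℝ | ∃ P : ℝ → ℂ, IsPiecewiseC1Path P ∧ P 0 = z ∧ P 1 = w ∧
      L = ∫ s in (0:ℝ)..1, Real.exp (ξ * circleAvg h (δ/C) (P s)) * ‖deriv P s‖ } := by
    ext L
    simp only [Set.mem_setOf_eq, Set.mem_smul_set, smul_eq_mul]
    constructor
    · rintro ⟨P, hP, h0, h1, rfl⟩
      refine ⟨_, ⟨fun t => (C:ℂ)⁻¹ * P t, hP.const_mul _, ?_, ?_, rfl⟩, (key P).symm⟩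
      · simp only [h0, inv_mul_cancel_left₀ hC0]
      · simp only [h1, inv_mul_cancel_left₀ hC0]
    · rintro ⟨_, ⟨P, hP, h0, h1, rfl⟩, rfl⟩
      refine ⟨fun t => (C:ℂ) * P t, hP.const_mul _, by simp [h0], by simp [h1], ?_⟩
      rw [key]
      simp only [inv_mul_cancel_left₀ hC0]
  unfold lfppDist
  rw [hset, Real.sInf_smul_of_nonneg (Real.rpow_nonneg hC.le _), smul_eq_mul]


/-- Proposition 2.1 (deterministic, per-field form): if the rescaled LFPP distances
`δ^{-λ} D_h^{ξ,δ}(z,w)` converge as `δ → 0⁺` to a limit `𝔡_h(z,w)`, then the limiting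
quantity satisfies the scaling relations (2.8) and (2.9): adding a constant `c` to the
field multiplies the limit by `e^{ξc}`, and spatially rescaling the field by `C` together
with adding `Q log(1/C)` with `Q = (1-λ)/ξ` leaves it invariant. -/
theorem lfpp_limit_scaling_relations (h : ℂ → ℝ) (hcont : Continuous h)
    (ξ lam : ℝ) (hξ : 0 < ξ) (𝔡 : ℂ → ℂ → ℝ)
    (hlim : ∀ z w : ℂ,
      Filter.Tendsto (fun δ : ℝ => δ ^ (-lam) * lfppDist h ξ δ z w)
        (nhdsWithin 0 (Set.Ioi 0)) (nhds (𝔡 z w))) :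
    (∀ c : ℝ, ∀ z w : ℂ,
      Filter.Tendsto (fun δ : ℝ => δ ^ (-lam) * lfppDist (fun u => h u + c) ξ δ z w)
        (nhdsWithin 0 (Set.Ioi 0)) (nhds (Real.exp (ξ * c) * 𝔡 z w))) ∧
    (∀ C : ℝ, 0 < C → ∀ z w : ℂ,
      Filter.Tendsto (fun δ : ℝ =>
          δ ^ (-lam) *
            lfppDist (fun u => h (u / (C : ℂ)) + ((1 - lam) / ξ) * Real.log (1 / C)) ξ δ
              ((C : ℂ) * z) ((C : ℂ) * w))
        (nhdsWithin 0 (Set.Ioi 0)) (nhds (𝔡 z w))) := by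
  constructor
  · intro c z w
    have h2 := (hlim z w).const_mul (Real.exp (ξ * c))
    apply h2.congr
    intro δ
    rw [lfppDist_add_const h hcont]
    ring
  · intro C hC z w
    have h1 : Filter.Tendsto (fun δ : ℝ => δ / C)
        (nhdsWithin 0 (Set.Ioi 0)) (nhdsWithin 0 (Set.Ioi 0)) := by
      apply tendsto_nhdsWithin_iff.mpr
      constructor
      · have := ((continuous_id.div_const C).tendsto (0:ℝ)).mono_left
          (nhdsWithin_le_nhds (s := Set.Ioi (0:ℝ)))
        simpa using this
      · filter_upwards [self_mem_nhdsWithin] with δ hδ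
        exact div_pos hδ hC
    have h2 := (hlim z w).comp h1
    refine Filter.Tendsto.congr' ?_ h2
    filter_upwards [self_mem_nhdsWithin] with δ hδ
    simp only [Function.comp]
    rw [lfppDist_scale h hcont ξ lam hξ hC δ z w,
      Real.div_rpow hδ.le hC.le, Real.rpow_neg hC.le]
    field_simp
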